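/- arXiv:2305.07914 — 4 statements merged into one kernel-verified Lean document; each statement's English description precedes it below -/
import Mathlib

section
/- (Universal uncertainty relation for interactive measurements, single-intervention case.) Let T = {T_x}_{x=1}^m and S = {S_y}_{y=1}^m be two testers and let w be their roulette vector. Then for every process comb J, writing p_x := Tr[J T_x] and q_y := Tr[J S_y], the concatenated vector (1/2)p ⊕ (1/2)q ∈ ℝ^{2m} is majorized by w; in particular the bound w is independent of the probed process J. -/
/-
Each entry of `(1/2)p ⊕ (1/2)q` is the payoff of one chip position of the roulette when the
process is `J`, so any `k` of its entries sum to at most `P_k`, whereas the first `k` entries of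
`w` telescope to exactly `P_k`. Both vectors sum to `1`, because a tester is normalised on every
comb: `Tr[J (Λ ⊗ I_C)] = Tr[(Tr_C J) Λ] = Tr[(ρ ⊗ I_B) Λ] = Tr[ρ Tr_B Λ] = Tr ρ = 1`.
-/

open Matrix BigOperators ComplexOrder

noncomputable section

/-- Index type for the three systems A, B, C. -/
abbrev PIdx (dA dB dC : ℕ) := Fin dA × Fin dB × Fin dC

/-- Matrices on `ℂ^{dA} ⊗ ℂ^{dB} ⊗ ℂ^{dC}`. -/
abbrev PMat (dA dB dC : ℕ) := Matrix (PIdx dA dB dC) (PIdx dA dB dC) ℂ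

/-- Partial trace over the third (C) tensor factor. -/
def trC {dA dB dC : ℕ} (M : PMat dA dB dC) :
    Matrix (Fin dA × Fin dB) (Fin dA × Fin dB) ℂ :=
  Matrix.of fun i j => ∑ c : Fin dC, M (i.1, i.2, c) (j.1, j.2, c)

/-- Partial trace over the second tensor factor of a bipartite matrix. -/
def trSnd {d₁ d₂ : ℕ} (M : Matrix (Fin d₁ × Fin d₂) (Fin d₁ × Fin d₂) ℂ) :
    Matrix (Fin d₁) (Fin d₁) ℂ :=
  Matrix.of fun a a' => ∑ b : Fin d₂, M (a, b) (a', b)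

/-- A process comb: a PSD matrix `J` on A ⊗ B ⊗ C with `Tr_C J = ρ_A ⊗ I_B`
for some state `ρ_A`. -/
def IsProcessComb {dA dB dC : ℕ} (J : PMat dA dB dC) : Prop :=
  J.PosSemidef ∧ ∃ ρ : Matrix (Fin dA) (Fin dA) ℂ,
    ρ.PosSemidef ∧ ρ.trace = 1 ∧
    trC J = Matrix.of fun i j => ρ i.1 j.1 * (if i.2 = j.2 then (1 : ℂ) else 0)

/-- A tester with `m` outcomes: PSD matrices `T x` with `∑ x, T x = Λ ⊗ I_C`
for some PSD `Λ` on A ⊗ B with `Tr_B Λ = I_A`. -/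
def IsTester {dA dB dC m : ℕ} (T : Fin m → PMat dA dB dC) : Prop :=
  (∀ x, (T x).PosSemidef) ∧
  ∃ Λ : Matrix (Fin dA × Fin dB) (Fin dA × Fin dB) ℂ,
    Λ.PosSemidef ∧ trSnd Λ = 1 ∧
    (∑ x, T x) = Matrix.of fun i j =>
      Λ (i.1, i.2.1) (j.1, j.2.1) * (if i.2.2 = j.2.2 then (1 : ℂ) else 0)

/-- Outcome probability `Tr[J T]` (as a real number). -/
def prob {dA dB dC : ℕ} (J T : PMat dA dB dC) : ℝ := ((J * T).trace).re

/-- `P_k`: Bob's optimal winning probability in the quantum roulette with `k` chips,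
for the pair of testers `T`, `S`. -/
def rouletteP {dA dB dC m : ℕ} (T S : Fin m → PMat dA dB dC) (k : ℕ) : ℝ :=
  sSup { r : ℝ | ∃ J : PMat dA dB dC, IsProcessComb J ∧
    ∃ G : Finset (Fin 2 × Fin m), G.card = k ∧
      r = ∑ g ∈ G, (1 / 2 : ℝ) * prob J (if g.1 = 0 then T g.2 else S g.2) }

/-- The roulette vector `w ∈ ℝ^{2m}`, `w_k = P_k - P_{k-1}`. -/
def rouletteW {dA dB dC m : ℕ} (T S : Fin m → PMat dA dB dC) : Fin (m + m) → ℝ :=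
  fun k => rouletteP T S (k.1 + 1) - rouletteP T S k.1

/-- Sum of the `k` largest entries of a (nonnegative) vector, padding with zeros. -/
def kMaxSum {n : ℕ} (u : Fin n → ℝ) (k : ℕ) : ℝ :=
  sSup { r : ℝ | ∃ A : Finset (Fin n), A.card = min k n ∧ r = ∑ i ∈ A, u i }

/-- `MajorizedBy u v` means `u ≺ v`: every partial sum of the `k` largest entries of `u`
is at most that of `v`, and the total sums agree. -/
def MajorizedBy {m n : ℕ} (u : Fin m → ℝ) (v : Fin n → ℝ) : Prop :=
  (∀ k : ℕ, kMaxSum u k ≤ kMaxSum v k) ∧ ∑ i, u i = ∑ i, v i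

/-- Base-2 Shannon entropy of a finite vector. -/
def H2 {n : ℕ} (p : Fin n → ℝ) : ℝ := -∑ i, p i * Real.logb 2 (p i)

namespace Matrix.PosSemidef

variable {n 𝕜 : Type*} [Fintype n] [RCLike 𝕜]

open scoped MatrixOrder in
lemma trace_mul_nonneg {A B : Matrix n n 𝕜} (hA : A.PosSemidef) (hB : B.PosSemidef) :
    0 ≤ (A * B).trace := by
  classical
  obtain ⟨C, rfl⟩ := CStarAlgebra.nonneg_iff_eq_star_mul_self.mp hA.nonneg
  rw [star_eq_conjTranspose, Matrix.mul_assoc, trace_mul_comm]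
  exact (hB.mul_mul_conjTranspose_same C).trace_nonneg

end Matrix.PosSemidef

lemma trace_mul_eq_trace_trC_mul {dA dB dC : ℕ} (J : PMat dA dB dC)
    (Λ : Matrix (Fin dA × Fin dB) (Fin dA × Fin dB) ℂ) :
    (J * Matrix.of fun i j : PIdx dA dB dC =>
      Λ (i.1, i.2.1) (j.1, j.2.1) * (if i.2.2 = j.2.2 then (1 : ℂ) else 0)).trace =
      (trC J * Λ).trace := by
  simp only [trace, diag_apply, Matrix.mul_apply, of_apply, trC, mul_ite, mul_one, mul_zero,
    Fintype.sum_prod_type, Finset.sum_ite_eq', Finset.mem_univ, ↓reduceIte, Finset.sum_mul]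
  refine Fintype.sum_congr _ _ fun a => Fintype.sum_congr _ _ fun b => ?_
  rw [Finset.sum_comm]
  exact Fintype.sum_congr _ _ fun _ => Finset.sum_comm

lemma trace_mul_eq_trace_mul_trSnd {d₁ d₂ : ℕ} (ρ : Matrix (Fin d₁) (Fin d₁) ℂ)
    (Λ : Matrix (Fin d₁ × Fin d₂) (Fin d₁ × Fin d₂) ℂ) :
    ((Matrix.of fun i j : Fin d₁ × Fin d₂ => ρ i.1 j.1 * if i.2 = j.2 then (1 : ℂ) else 0) *
      Λ).trace = (ρ * trSnd Λ).trace := by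
  simp only [trace, diag_apply, Matrix.mul_apply, of_apply, trSnd, mul_ite, mul_one, mul_zero,
    ite_mul, zero_mul, Fintype.sum_prod_type, Finset.sum_ite_eq, Finset.mem_univ, ↓reduceIte,
    Finset.mul_sum]
  exact Fintype.sum_congr _ _ fun _ => Finset.sum_comm

lemma prob_nonneg {dA dB dC : ℕ} {J T : PMat dA dB dC} (hJ : J.PosSemidef)
    (hT : T.PosSemidef) :
    0 ≤ prob J T :=
  (Complex.nonneg_iff.mp (hJ.trace_mul_nonneg hT)).1

lemma IsTester.sum_prob_eq_one {dA dB dC m : ℕ} {T : Fin m → PMat dA dB dC} (hT : IsTester T)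
    {J : PMat dA dB dC} (hJ : IsProcessComb J) : ∑ x, prob J (T x) = 1 := by
  obtain ⟨-, ρ, -, hρ, hJρ⟩ := hJ
  obtain ⟨-, Λ, -, hΛ, hTΛ⟩ := hT
  have : (J * ∑ x, T x).trace = 1 := by
    rw [hTΛ, trace_mul_eq_trace_trC_mul, hJρ, trace_mul_eq_trace_mul_trSnd, hΛ, Matrix.mul_one,
      hρ]
  simp only [prob, ← Complex.re_sum, ← Matrix.trace_sum, ← Finset.mul_sum, this,
    Complex.one_re]

section BestSubsetSum

variable {α ι : Type*}

def bestSubsetSum (Q : α → Prop) (p : α → ι → ℝ) (k : ℕ) : ℝ :=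
  sSup {r | ∃ a, Q a ∧ ∃ G : Finset ι, G.card = k ∧ r = ∑ g ∈ G, p a g}

variable {Q : α → Prop} {p : α → ι → ℝ}

lemma bestSubsetSum_zero : bestSubsetSum Q p 0 = 0 := by
  have : {r | ∃ a, Q a ∧ ∃ G : Finset ι, G.card = 0 ∧ r = ∑ g ∈ G, p a g} ⊆ {0} := by
    rintro r ⟨a, -, G, hG, rfl⟩
    simp [Finset.card_eq_zero.mp hG]
  rcases Set.subset_singleton_iff_eq.mp this with h | h <;>
    simp only [bestSubsetSum, h, Real.sSup_empty, csSup_singleton]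

variable [Fintype ι]

lemma sum_le_bestSubsetSum (hp : ∀ a, Q a → ∀ i, 0 ≤ p a i)
    (hp1 : ∀ a, Q a → ∑ i, p a i = 1) {a : α} (ha : Q a) (G : Finset ι) :
    ∑ g ∈ G, p a g ≤ bestSubsetSum Q p G.card := by
  refine le_csSup ⟨1, ?_⟩ ⟨a, ha, G, rfl, rfl⟩
  rintro r ⟨b, hb, _, -, rfl⟩
  exact (hp1 b hb) ▸ Finset.sum_le_univ_sum_of_nonneg (hp b hb)

lemma bestSubsetSum_card_univ (hp1 : ∀ a, Q a → ∑ i, p a i = 1) {a : α} (ha : Q a) :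
    bestSubsetSum Q p (Fintype.card ι) = 1 := by
  have : {r | ∃ a, Q a ∧ ∃ G : Finset ι, G.card = Fintype.card ι ∧
      r = ∑ g ∈ G, p a g} = {1} := by
    refine Set.eq_singleton_iff_unique_mem.2
      ⟨⟨a, ha, _, Finset.card_univ, (hp1 a ha).symm⟩, ?_⟩
    rintro r ⟨b, hb, G, hG, rfl⟩
    rw [G.eq_univ_of_card hG, hp1 b hb]
  rw [bestSubsetSum, this, csSup_singleton]

end BestSubsetSum

lemma majorizedBy_of_sum_le {n : ℕ} (u : Fin n → ℝ) (P : ℕ → ℝ) (hP0 : P 0 = 0)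
    (hu : ∀ A : Finset (Fin n), ∑ i ∈ A, u i ≤ P A.card) (hun : ∑ i, u i = P n) :
    MajorizedBy u fun i : Fin n => P (i + 1) - P i := by
  have telescope : ∀ j, ∑ i : Fin j, (P (i + 1) - P i) = P j := fun j => by
    rw [Fin.sum_univ_eq_sum_range (fun i => P (i + 1) - P i), Finset.sum_range_sub, hP0, sub_zero]
  have initial_segment : ∀ j ≤ n, ∃ A : Finset (Fin n), A.card = j ∧
      ∑ i ∈ A, (P (i + 1) - P i) = P j := fun j hj =>
    ⟨Finset.univ.map (Fin.castLEEmb hj), by simp, by rw [Finset.sum_map]; exact telescope j⟩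
  refine ⟨fun k => ?_, hun.trans (telescope n).symm⟩
  obtain ⟨A, hA, hAP⟩ := initial_segment (min k n) (min_le_right k n)
  calc kMaxSum u k ≤ P (min k n) :=
        csSup_le ⟨_, A, hA, rfl⟩ fun r ⟨B, hB, hr⟩ => hr ▸ hB ▸ hu B
    _ ≤ kMaxSum (fun i : Fin n => P (i + 1) - P i) k := by
        refine le_csSup (Set.Finite.bddAbove ?_) ⟨A, hA, hAP.symm⟩
        exact (Set.finite_range fun B : Finset (Fin n) => ∑ i ∈ B, (P (i + 1) - P i)).subset
          fun r ⟨B, _, hr⟩ => ⟨B, hr.symm⟩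

def roulettePayoff {dA dB dC m : ℕ} (T S : Fin m → PMat dA dB dC) (J : PMat dA dB dC)
    (g : Fin 2 × Fin m) : ℝ :=
  1 / 2 * prob J (if g.1 = 0 then T g.2 else S g.2)

lemma rouletteP_eq_bestSubsetSum {dA dB dC m : ℕ} (T S : Fin m → PMat dA dB dC) :
    rouletteP T S = bestSubsetSum IsProcessComb (roulettePayoff T S) := rfl

section Roulette

variable {dA dB dC m : ℕ} {T S : Fin m → PMat dA dB dC}

lemma roulettePayoff_nonneg (hT : IsTester T) (hS : IsTester S) {J : PMat dA dB dC}
    (hJ : IsProcessComb J) (g : Fin 2 × Fin m) : 0 ≤ roulettePayoff T S J g := by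
  unfold roulettePayoff
  split_ifs
  · exact mul_nonneg (by norm_num) (prob_nonneg hJ.1 (hT.1 g.2))
  · exact mul_nonneg (by norm_num) (prob_nonneg hJ.1 (hS.1 g.2))

lemma sum_roulettePayoff (hT : IsTester T) (hS : IsTester S) {J : PMat dA dB dC}
    (hJ : IsProcessComb J) : ∑ g, roulettePayoff T S J g = 1 := by
  simp only [roulettePayoff, Fintype.sum_prod_type, Fin.sum_univ_two, ← Finset.mul_sum]
  norm_num [hT.sum_prob_eq_one hJ, hS.sum_prob_eq_one hJ]

end Roulette

theorem universal_uncertainty_relation_interactive_general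
    {dA dB dC m : ℕ}
    (T S : Fin m → PMat dA dB dC) (hT : IsTester T) (hS : IsTester S)
    (J : PMat dA dB dC) (hJ : IsProcessComb J) :
    MajorizedBy
      (Fin.append (fun x => prob J (T x) / 2) (fun y => prob J (S y) / 2))
      (rouletteW T S) := by
  set e : Fin (m + m) → Fin 2 × Fin m := Fin.append (fun x => (0, x)) (fun y => (1, y))
  have he : Function.Injective e :=
    Fin.append_injective_iff.2 ⟨Prod.mk_right_injective 0, Prod.mk_right_injective 1, by simp⟩
  have hu : Fin.append (fun x => prob J (T x) / 2) (fun y => prob J (S y) / 2) =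
      roulettePayoff T S J ∘ e := by
    ext i
    refine Fin.addCases (fun x => ?_) (fun y => ?_) i <;>
      simp only [Function.comp_apply, e, Fin.append_left, Fin.append_right, roulettePayoff] <;>
      norm_num <;> ring
  have hp0 := fun J' (hJ' : IsProcessComb J') => roulettePayoff_nonneg hT hS hJ'
  have hp1 := fun J' (hJ' : IsProcessComb J') => sum_roulettePayoff hT hS hJ'
  have hcard : Fintype.card (Fin 2 × Fin m) = m + m := by simp [two_mul]
  rw [hu]
  refine majorizedBy_of_sum_le _ (rouletteP T S) bestSubsetSum_zero (fun A => ?_) ?_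
  · simpa [Finset.sum_map, rouletteP_eq_bestSubsetSum] using
      sum_le_bestSubsetSum hp0 hp1 hJ (A.map ⟨e, he⟩)
  · have hbij : e.Bijective :=
      (Fintype.bijective_iff_injective_and_card e).2 ⟨he, by rw [hcard, Fintype.card_fin]⟩
    rw [Fintype.sum_congr _ _ fun i => Function.comp_apply, hbij.sum_comp, hp1 J hJ, ← hcard,
      rouletteP_eq_bestSubsetSum, bestSubsetSum_card_univ hp1 hJ]

/-- universal uncertainty relation for interactive measurements,
single-intervention case: for any two testers `T`, `S` with roulette vector `w`
and any process comb `J`, the concatenation `(1/2)p ⊕ (1/2)q` of the halved outcome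
distributions is majorized by `w`; the bound `w` does not depend on `J`. -/
theorem universal_uncertainty_relation_interactive
    {dA dB dC m : ℕ} (hA : 0 < dA) (hB : 0 < dB) (hC : 0 < dC)
    (T S : Fin m → PMat dA dB dC) (hT : IsTester T) (hS : IsTester S)
    (J : PMat dA dB dC) (hJ : IsProcessComb J) :
    MajorizedBy
      (Fin.append (fun x => prob J (T x) / 2) (fun y => prob J (S y) / 2))
      (rouletteW T S) :=
  universal_uncertainty_relation_interactive_general T S hT hS J hJ
end
end

section
/- (Saturation of the causal uncertainty relation.) Let d ≥ 2 and take the process comb J := |Φ_1⟩⟨Φ_1|_{AC} ⊗ I_B (which indeed satisfies Tr_C J = (I_A/d) ⊗ I_B). Then with identity unitaries, the common-cause indicator distribution of J is deterministic (p_i = δ_{i1}, so H(p) = 0) while the direct-cause indicator distribution is uniform (q_i = 1/d² for all i, so H(q) = 2 log₂ d); hence H(p) + H(q) = 2 log₂ d and the causal uncertainty bound is attained. -/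
open Matrix BigOperators ComplexOrder

noncomputable section

/-- Rank-one projector `|φ⟩⟨φ|` on a bipartite system. -/
def projMat {d : ℕ} (φ : Fin d × Fin d → ℂ) :
    Matrix (Fin d × Fin d) (Fin d × Fin d) ℂ :=
  Matrix.of fun x y => φ x * (starRingEnd ℂ) (φ y)

/-- Embed an operator on A ⊗ C as an operator on A ⊗ B ⊗ C acting as the identity on B. -/
def embAC {d : ℕ} (M : Matrix (Fin d × Fin d) (Fin d × Fin d) ℂ) : PMat d d d :=
  Matrix.of fun i j => M (i.1, i.2.2) (j.1, j.2.2) * (if i.2.1 = j.2.1 then (1 : ℂ) else 0)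

/-- Embed an operator on B ⊗ C as an operator on A ⊗ B ⊗ C acting as the identity on A. -/
def embBC {d : ℕ} (M : Matrix (Fin d × Fin d) (Fin d × Fin d) ℂ) : PMat d d d :=
  Matrix.of fun i j => M (i.2.1, i.2.2) (j.2.1, j.2.2) * (if i.1 = j.1 then (1 : ℂ) else 0)

/-- `(U ⊗ V) |φ⟩` for a bipartite vector `φ`. -/
def kronVec {d : ℕ} (U V : Matrix (Fin d) (Fin d) ℂ) (φ : Fin d × Fin d → ℂ) :
    Fin d × Fin d → ℂ :=
  fun x => ∑ y : Fin d × Fin d, U x.1 y.1 * V x.2 y.2 * φ y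

/-- An orthonormal basis `{Φ_i}` of `ℂ^d ⊗ ℂ^d` consisting of maximally entangled vectors,
with `Φ_1 = (1/√d) ∑_k |kk⟩`. -/
def IsMaxEntBasis {d : ℕ} (Φ : Fin (d * d) → Fin d × Fin d → ℂ) : Prop :=
  (∀ i j, ∑ x : Fin d × Fin d, (starRingEnd ℂ) (Φ i x) * Φ j x
      = if i = j then (1 : ℂ) else 0) ∧
  (∀ i a a', ∑ b : Fin d, Φ i (a, b) * (starRingEnd ℂ) (Φ i (a', b))
      = if a = a' then (1 : ℂ) / d else 0) ∧
  (∀ i b b', ∑ a : Fin d, Φ i (a, b) * (starRingEnd ℂ) (Φ i (a, b'))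
      = if b = b' then (1 : ℂ) / d else 0) ∧
  ∀ (h : 0 < d * d) (x : Fin d × Fin d),
    Φ ⟨0, h⟩ x = if x.1 = x.2 then ((1 / Real.sqrt d : ℝ) : ℂ) else 0

/-- Outcome distribution of the common-cause indicator `T_CC(U₁, U₂)` on a process comb:
`p_i = (1/d) Tr[J ((U₁⊗U₂)|Φ_i⟩⟨Φ_i|(U₁⊗U₂)†)_{AC} ⊗ I_B]`. -/
def ccProb {d : ℕ} (U₁ U₂ : Matrix (Fin d) (Fin d) ℂ)
    (Φ : Fin (d * d) → Fin d × Fin d → ℂ) (J : PMat d d d) : Fin (d * d) → ℝ :=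
  fun i => (1 / d) * prob J (embAC (projMat (kronVec U₁ U₂ (Φ i))))

/-- Outcome distribution of the direct-cause indicator `T_DC(U₃, U₄)` on a process comb:
`q_i = (1/d) Tr[J (I_A ⊗ ((U₃⊗U₄)|Φ_i⟩⟨Φ_i|(U₃⊗U₄)†)_{BC})]`. -/
def dcProb {d : ℕ} (U₃ U₄ : Matrix (Fin d) (Fin d) ℂ)
    (Φ : Fin (d * d) → Fin d × Fin d → ℂ) (J : PMat d d d) : Fin (d * d) → ℝ :=
  fun i => (1 / d) * prob J (embBC (projMat (kronVec U₃ U₄ (Φ i))))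

/-! `J = |Φ₁⟩⟨Φ₁|_{AC} ⊗ I_B` is positive, and its `C`-marginal is `I_A/d ⊗ I_B` because
`Φ₁` is maximally entangled. For the common-cause test `Tr[(P ⊗ I_B)(Q ⊗ I_B)] = d Tr[P Q]`,
so `p_i = |⟨Φ_i, Φ₁⟩|²`, which is `δ_{i1}` by orthonormality. For the direct-cause test
`Tr[(M_{AC} ⊗ I_B)(I_A ⊗ N_{BC})] = Tr_C[Tr_A M · Tr_B N]`, and `Tr_A |Φ₁⟩⟨Φ₁| = I_C/d`,
so every `q_i = Tr |Φ_i⟩⟨Φ_i| / d² = 1/d²`. The entropies are then `0` and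
`log₂ d² = 2 log₂ d`. -/

open scoped Kronecker

lemma Matrix.trace_submatrix_equiv {m n R : Type*} [Fintype m] [Fintype n] [AddCommMonoid R]
    (A : Matrix n n R) (e : m ≃ n) : (A.submatrix e e).trace = A.trace :=
  e.sum_comp A.diag

section

variable {d : ℕ}

lemma projMat_eq_vecMulVec (φ : Fin d × Fin d → ℂ) :
    projMat φ = vecMulVec φ (star φ) :=
  rfl

lemma posSemidef_projMat (φ : Fin d × Fin d → ℂ) : (projMat φ).PosSemidef :=
  posSemidef_vecMulVec_self_star φ

lemma trace_projMat (φ : Fin d × Fin d → ℂ) : (projMat φ).trace = star φ ⬝ᵥ φ := by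
  rw [projMat_eq_vecMulVec, trace_vecMulVec, dotProduct_comm]

lemma trace_projMat_mul_projMat (φ ψ : Fin d × Fin d → ℂ) :
    (projMat φ * projMat ψ).trace = (star φ ⬝ᵥ ψ) * (star ψ ⬝ᵥ φ) := by
  rw [projMat_eq_vecMulVec, projMat_eq_vecMulVec, vecMulVec_mul_vecMulVec, trace_vecMulVec,
    dotProduct_smul, smul_eq_mul, dotProduct_comm φ]

lemma kronVec_one_one (φ : Fin d × Fin d → ℂ) : kronVec 1 1 φ = φ := by
  funext x
  simp [kronVec, Matrix.one_apply, Fintype.sum_prod_type]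

def acbEquiv : PIdx d d d ≃ (Fin d × Fin d) × Fin d where
  toFun i := ((i.1, i.2.2), i.2.1)
  invFun j := (j.1.1, j.2, j.1.2)
  left_inv _ := rfl
  right_inv _ := rfl

lemma embAC_eq_submatrix_kronecker (M : Matrix (Fin d × Fin d) (Fin d × Fin d) ℂ) :
    embAC M = (M ⊗ₖ (1 : Matrix (Fin d) (Fin d) ℂ)).submatrix acbEquiv acbEquiv := by
  ext i j
  simp [embAC, acbEquiv, Matrix.one_apply]

lemma Matrix.PosSemidef.embAC {M : Matrix (Fin d × Fin d) (Fin d × Fin d) ℂ}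
    (hM : M.PosSemidef) : (embAC M).PosSemidef := by
  rw [embAC_eq_submatrix_kronecker]
  exact (hM.kronecker PosSemidef.one).submatrix _

lemma trC_embAC (M : Matrix (Fin d × Fin d) (Fin d × Fin d) ℂ) :
    trC (embAC M) = of fun i j => trSnd M i.1 j.1 * if i.2 = j.2 then (1 : ℂ) else 0 := by
  ext i j
  simp [trC, embAC, trSnd]

lemma trace_embAC_mul_embAC (M N : Matrix (Fin d × Fin d) (Fin d × Fin d) ℂ) :
    (embAC M * embAC N).trace = d * (M * N).trace := by
  rw [embAC_eq_submatrix_kronecker, embAC_eq_submatrix_kronecker, submatrix_mul_equiv,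
    trace_submatrix_equiv, ← mul_kronecker_mul, one_mul, trace_kronecker, trace_one,
    Fintype.card_fin, mul_comm]

lemma trace_embAC_mul_embBC (M N : Matrix (Fin d × Fin d) (Fin d × Fin d) ℂ) :
    (embAC M * embBC N).trace =
      ∑ c, ∑ c', (∑ a, M (a, c) (a, c')) * ∑ b, N (b, c') (b, c) := by
  simp only [trace, diag, mul_apply, embAC, embBC, of_apply, Fintype.sum_prod_type, mul_ite,
    ite_mul, mul_one, mul_zero, zero_mul, Finset.sum_ite_irrel, Finset.sum_const_zero,
    Finset.sum_ite_eq, Finset.sum_ite_eq', Finset.mem_univ, if_true, Finset.sum_mul_sum]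
  simp only [← Finset.sum_product']
  exact Finset.sum_equiv ((Equiv.prodAssoc _ _ _).symm.trans
    ((Equiv.prodComm _ _).trans (Equiv.prodAssoc _ _ _))) (by simp) fun _ _ => rfl

lemma trace_embAC_mul_embBC_eq_mul_trace {M : Matrix (Fin d × Fin d) (Fin d × Fin d) ℂ}
    {r : ℂ}
    (hM : ∀ c c', ∑ a, M (a, c) (a, c') = if c = c' then r else 0)
    (N : Matrix (Fin d × Fin d) (Fin d × Fin d) ℂ) :
    (embAC M * embBC N).trace = r * N.trace := by
  rw [trace_embAC_mul_embBC]
  simp only [hM, ite_mul, zero_mul, Finset.sum_ite_eq, Finset.mem_univ,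
    if_true, ← Finset.mul_sum, trace, diag, Fintype.sum_prod_type]
  rw [Finset.sum_comm]

end

lemma H2_ite_eq {n : ℕ} (i₀ : Fin n) : H2 (fun i => if i = i₀ then (1 : ℝ) else 0) = 0 := by
  simp [H2, apply_ite]

lemma H2_uniform (n : ℕ) : H2 (fun _ : Fin n => (n : ℝ)⁻¹) = Real.logb 2 n := by
  rcases eq_or_ne n 0 with rfl | hn
  · simp [H2]
  · simp [H2, Real.logb_inv, hn]

namespace IsMaxEntBasis

variable {d : ℕ} {Φ : Fin (d * d) → Fin d × Fin d → ℂ}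

lemma star_dotProduct (hΦ : IsMaxEntBasis Φ) (i j : Fin (d * d)) :
    star (Φ i) ⬝ᵥ Φ j = if i = j then 1 else 0 :=
  hΦ.1 i j

lemma trSnd_projMat (hΦ : IsMaxEntBasis Φ) (i : Fin (d * d)) :
    trSnd (projMat (Φ i)) = (d : ℂ)⁻¹ • 1 := by
  ext a a'
  simp only [trSnd, projMat, of_apply, hΦ.2.1 i a a', Matrix.smul_apply, one_apply, smul_eq_mul,
    mul_ite, mul_one, mul_zero, one_div]

lemma trace_embAC_projMat_mul_embBC_projMat (hΦ : IsMaxEntBasis Φ) (i j : Fin (d * d)) :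
    (embAC (projMat (Φ i)) * embBC (projMat (Φ j))).trace = (d : ℂ)⁻¹ := by
  rw [trace_embAC_mul_embBC_eq_mul_trace (hΦ.2.2.1 i), trace_projMat, hΦ.star_dotProduct,
    if_pos rfl, mul_one, one_div]

lemma ccProb_one_one_embAC_projMat (hΦ : IsMaxEntBasis Φ) (i₀ i : Fin (d * d)) :
    ccProb 1 1 Φ (embAC (projMat (Φ i₀))) i = if i = i₀ then 1 else 0 := by
  have hd : (d : ℝ) ≠ 0 := Nat.cast_ne_zero.mpr (left_ne_zero_of_mul i.pos.ne')
  rw [ccProb, prob, kronVec_one_one, trace_embAC_mul_embAC, trace_projMat_mul_projMat,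
    hΦ.star_dotProduct, hΦ.star_dotProduct]
  by_cases h : i = i₀
  · simp [h, hd]
  · simp [h, Ne.symm h]

lemma dcProb_one_one_embAC_projMat (hΦ : IsMaxEntBasis Φ) (i₀ i : Fin (d * d)) :
    dcProb 1 1 Φ (embAC (projMat (Φ i₀))) i = 1 / (d ^ 2 : ℝ) := by
  rw [dcProb, prob, kronVec_one_one, hΦ.trace_embAC_projMat_mul_embBC_projMat,
    ← Complex.ofReal_natCast, ← Complex.ofReal_inv, Complex.ofReal_re]
  ring

end IsMaxEntBasis

theorem causal_uncertainty_relation_saturation_general {d : ℕ}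
    (Φ : Fin (d * d) → Fin d × Fin d → ℂ) (hΦ : IsMaxEntBasis Φ)
    (i₀ : Fin (d * d))
    (J : PMat d d d) (hJdef : J = embAC (projMat (Φ i₀))) :
    IsProcessComb J ∧
    trC J = Matrix.of (fun i j =>
      (if i.1 = j.1 then ((d : ℂ))⁻¹ else 0) * (if i.2 = j.2 then (1 : ℂ) else 0)) ∧
    (∀ i, ccProb 1 1 Φ J i = if i = i₀ then 1 else 0) ∧
    H2 (ccProb 1 1 Φ J) = 0 ∧
    (∀ i, dcProb 1 1 Φ J i = 1 / (d ^ 2 : ℝ)) ∧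
    H2 (dcProb 1 1 Φ J) = 2 * Real.logb 2 d ∧
    H2 (ccProb 1 1 Φ J) + H2 (dcProb 1 1 Φ J) = 2 * Real.logb 2 d := by
  subst hJdef
  have hd : (d : ℂ) ≠ 0 := Nat.cast_ne_zero.mpr (left_ne_zero_of_mul i₀.pos.ne')
  have htrC : trC (embAC (projMat (Φ i₀))) =
      of fun i j => ((d : ℂ)⁻¹ • (1 : Matrix (Fin d) (Fin d) ℂ)) i.1 j.1 *
        if i.2 = j.2 then (1 : ℂ) else 0 := by
    rw [trC_embAC, hΦ.trSnd_projMat]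
  have hcc := hΦ.ccProb_one_one_embAC_projMat i₀
  have hdc := hΦ.dcProb_one_one_embAC_projMat i₀
  have hHp : H2 (ccProb 1 1 Φ (embAC (projMat (Φ i₀)))) = 0 := by
    rw [funext hcc, H2_ite_eq]
  have hHq : H2 (dcProb 1 1 Φ (embAC (projMat (Φ i₀)))) = 2 * Real.logb 2 d := by
    have huniform :
        dcProb 1 1 Φ (embAC (projMat (Φ i₀))) = fun _ => ((d * d : ℕ) : ℝ)⁻¹ := by
      funext i
      rw [hdc, Nat.cast_mul, one_div, sq]
    rw [huniform, H2_uniform, Nat.cast_mul, ← sq, Real.logb_pow, Nat.cast_ofNat]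
  refine ⟨⟨(posSemidef_projMat _).embAC, (d : ℂ)⁻¹ • 1, PosSemidef.one.smul (by positivity),
    ?_, htrC⟩, ?_, hcc, hHp, hdc, hHq, by rw [hHp, hHq, zero_add]⟩
  · rw [trace_smul, trace_one, Fintype.card_fin, smul_eq_mul, inv_mul_cancel₀ hd]
  · rw [htrC]
    ext i j
    simp [one_apply]

/-- saturation of the causal uncertainty relation: for
`J = |Φ_1⟩⟨Φ_1|_{AC} ⊗ I_B` (a process comb with `Tr_C J = (I_A/d) ⊗ I_B`) and identity
unitaries, the common-cause distribution is deterministic (`p_i = δ_{i1}`, `H(p) = 0`),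
the direct-cause distribution is uniform (`q_i = 1/d²`, `H(q) = 2 log₂ d`), and
`H(p) + H(q) = 2 log₂ d`. -/
theorem causal_uncertainty_relation_saturation {d : ℕ} (hd : 2 ≤ d)
    (Φ : Fin (d * d) → Fin d × Fin d → ℂ) (hΦ : IsMaxEntBasis Φ)
    (i₀ : Fin (d * d)) (hi₀ : (i₀ : ℕ) = 0)
    (J : PMat d d d) (hJdef : J = embAC (projMat (Φ i₀))) :
    IsProcessComb J ∧
    trC J = Matrix.of (fun i j =>
      (if i.1 = j.1 then ((d : ℂ))⁻¹ else 0) * (if i.2 = j.2 then (1 : ℂ) else 0)) ∧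
    (∀ i, ccProb 1 1 Φ J i = if i = i₀ then 1 else 0) ∧
    H2 (ccProb 1 1 Φ J) = 0 ∧
    (∀ i, dcProb 1 1 Φ J i = 1 / (d ^ 2 : ℝ)) ∧
    H2 (dcProb 1 1 Φ J) = 2 * Real.logb 2 d ∧
    H2 (ccProb 1 1 Φ J) + H2 (dcProb 1 1 Φ J) = 2 * Real.logb 2 d :=
  causal_uncertainty_relation_saturation_general Φ hΦ i₀ J hJdef
end
end

section
/- (Common-cause processes randomize the direct-cause indicator.) Let d ≥ 2. If a process comb is purely common-cause, i.e. J = σ_{AC} ⊗ I_B for a positive semidefinite σ on ℂ^d ⊗ ℂ^d (factors A and C) with Tr σ = 1, then for every choice of unitaries U₃, U₄ and every maximally entangled orthonormal basis {|Φ_i⟩}, the direct-cause indicator distribution of J is uniform: q_i = 1/d² for all i = 1, …, d². -/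
open Matrix BigOperators ComplexOrder

noncomputable section

/-- common-cause processes randomize the direct-cause indicator: if
`J = σ_{AC} ⊗ I_B` with `σ` a state on A ⊗ C, then for all unitaries `U₃, U₄` and any
maximally entangled orthonormal basis, the direct-cause distribution is uniform:
`q_i = 1/d²`. -/
theorem common_cause_randomizes_direct_cause_indicator {d : ℕ} (hd : 2 ≤ d)
    (Φ : Fin (d * d) → Fin d × Fin d → ℂ) (hΦ : IsMaxEntBasis Φ)
    (U₃ U₄ : Matrix (Fin d) (Fin d) ℂ)
    (hU₃ : U₃ ∈ Matrix.unitaryGroup (Fin d) ℂ)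
    (hU₄ : U₄ ∈ Matrix.unitaryGroup (Fin d) ℂ)
    (σ : Matrix (Fin d × Fin d) (Fin d × Fin d) ℂ)
    (hσ : σ.PosSemidef) (hσ1 : σ.trace = 1)
    (J : PMat d d d) (hJdef : J = embAC σ) :
    ∀ i, dcProb U₃ U₄ Φ J i = 1 / (d ^ 2 : ℝ) := by
  intro i
  obtain ⟨hΦ1, hΦ2, hΦ3, hΦ0⟩ := hΦ
  have hdR : (0:ℝ) < (d:ℝ) := by positivity
  have hdC : (d:ℂ) ≠ 0 := by exact_mod_cast (by omega : d ≠ 0)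
  set ψ : Fin d × Fin d → ℂ := kronVec U₃ U₄ (Φ i) with hψ
  -- unitarity facts
  have hU3col : ∀ x x' : Fin d,
      ∑ b : Fin d, U₃ b x * (starRingEnd ℂ) (U₃ b x') = if x' = x then (1:ℂ) else 0 := by
    intro x x'
    have h := congrFun (congrFun hU₃.1 x') x
    simp only [Matrix.mul_apply, Matrix.star_apply, Matrix.one_apply,
      Complex.star_def] at h
    rw [← h]
    exact Finset.sum_congr rfl fun b _ => mul_comm _ _
  have hU4row : ∀ c c' : Fin d,
      ∑ y : Fin d, U₄ c' y * (starRingEnd ℂ) (U₄ c y) = if c' = c then (1:ℂ) else 0 := by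
    intro c c'
    have h := congrFun (congrFun hU₄.2 c') c
    simp only [Matrix.mul_apply, Matrix.star_apply, Matrix.one_apply,
      Complex.star_def] at h
    exact h
  -- key lemma: partial trace of the projector over B
  have key : ∀ c c' : Fin d,
      ∑ b : Fin d, ψ (b, c') * (starRingEnd ℂ) (ψ (b, c))
        = if c = c' then 1 / (d:ℂ) else 0 := by
    intro c c'
    have expand : ∀ b : Fin d, ψ (b, c') * (starRingEnd ℂ) (ψ (b, c))
        = ∑ p : Fin d × Fin d, ∑ q : Fin d × Fin d,
            (U₃ b p.1 * (starRingEnd ℂ) (U₃ b q.1)) *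
              ((U₄ c' p.2 * (starRingEnd ℂ) (U₄ c q.2)) *
                (Φ i p * (starRingEnd ℂ) (Φ i q))) := by
      intro b
      simp only [hψ, kronVec, map_sum, _root_.map_mul, Finset.sum_mul, Finset.mul_sum]
      rw [Finset.sum_comm]
      exact Finset.sum_congr rfl fun p _ => Finset.sum_congr rfl fun q _ => by ring
    calc ∑ b : Fin d, ψ (b, c') * (starRingEnd ℂ) (ψ (b, c))
        = ∑ p : Fin d × Fin d, ∑ q : Fin d × Fin d,
            (∑ b : Fin d, U₃ b p.1 * (starRingEnd ℂ) (U₃ b q.1)) *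
              ((U₄ c' p.2 * (starRingEnd ℂ) (U₄ c q.2)) *
                (Φ i p * (starRingEnd ℂ) (Φ i q))) := by
          simp only [expand]
          rw [Finset.sum_comm]
          refine Finset.sum_congr rfl fun p _ => ?_
          rw [Finset.sum_comm]
          exact Finset.sum_congr rfl fun q _ => (Finset.sum_mul _ _ _).symm
      _ = ∑ p : Fin d × Fin d, ∑ q : Fin d × Fin d,
            (if q.1 = p.1 then (1:ℂ) else 0) *
              ((U₄ c' p.2 * (starRingEnd ℂ) (U₄ c q.2)) *
                (Φ i p * (starRingEnd ℂ) (Φ i q))) := by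
          simp only [hU3col]
      _ = ∑ p : Fin d × Fin d, ∑ y : Fin d,
            (U₄ c' p.2 * (starRingEnd ℂ) (U₄ c y)) *
              (Φ i p * (starRingEnd ℂ) (Φ i (p.1, y))) := by
          refine Finset.sum_congr rfl fun p _ => ?_
          rw [Fintype.sum_prod_type]
          rw [Finset.sum_eq_single p.1]
          · simp
          · intro x _ hx; simp [hx]
          · intro h; exact absurd (Finset.mem_univ _) h
      _ = ∑ y2 : Fin d, ∑ y : Fin d,
            (U₄ c' y2 * (starRingEnd ℂ) (U₄ c y)) *
              (∑ x : Fin d, Φ i (x, y2) * (starRingEnd ℂ) (Φ i (x, y))) := by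
          rw [Fintype.sum_prod_type, Finset.sum_comm]
          refine Finset.sum_congr rfl fun y2 _ => ?_
          rw [Finset.sum_comm]
          refine Finset.sum_congr rfl fun y _ => ?_
          rw [Finset.mul_sum]
      _ = ∑ y2 : Fin d,
            (U₄ c' y2 * (starRingEnd ℂ) (U₄ c y2)) * ((1:ℂ) / d) := by
          simp only [hΦ3]
          refine Finset.sum_congr rfl fun y2 _ => ?_
          rw [Finset.sum_eq_single y2]
          · simp
          · intro y _ hy; simp [Ne.symm hy]
          · intro h; exact absurd (Finset.mem_univ _) h
      _ = if c = c' then 1 / (d:ℂ) else 0 := by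
          rw [← Finset.sum_mul, hU4row]
          by_cases h : c = c' <;> simp [h, eq_comm]
  -- compute the trace
  have htr : (J * embBC (projMat ψ)).trace = 1 / (d:ℂ) := by
    have : (J * embBC (projMat ψ)).trace
        = ∑ p : PIdx d d d, ∑ q : PIdx d d d, J p q * embBC (projMat ψ) q p := by
      simp [Matrix.trace, Matrix.diag, Matrix.mul_apply]
    rw [this]
    simp only [hJdef, embAC, embBC, projMat, Matrix.of_apply]
    rw [Fintype.sum_prod_type]
    simp only [Fintype.sum_prod_type]
    simp only [mul_ite, mul_one, mul_zero, ite_mul, zero_mul,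
      Finset.sum_ite_eq, Finset.sum_ite_eq', Finset.mem_univ, if_true]
    calc (∑ a : Fin d, ∑ b : Fin d, ∑ c : Fin d, ∑ a' : Fin d, ∑ b' : Fin d, ∑ c' : Fin d,
          if a' = a then
            if b = b' then σ (a, c) (a', c') * (ψ (b', c') * (starRingEnd ℂ) (ψ (b, c))) else 0
          else 0)
        = ∑ a : Fin d, ∑ b : Fin d, ∑ c : Fin d, ∑ c' : Fin d,
            σ (a, c) (a, c') * (ψ (b, c') * (starRingEnd ℂ) (ψ (b, c))) := by
          refine Finset.sum_congr rfl fun a _ => Finset.sum_congr rfl fun b _ =>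
            Finset.sum_congr rfl fun c _ => ?_
          rw [Finset.sum_eq_single a]
          · simp only [if_true, eq_self_iff_true]
            rw [Finset.sum_eq_single b]
            · simp
            · intro b' _ hb'; simp [Ne.symm hb']
            · intro h; exact absurd (Finset.mem_univ _) h
          · intro a' _ ha'; simp [ha']
          · intro h; exact absurd (Finset.mem_univ _) h
      _ = ∑ a : Fin d, ∑ c : Fin d, ∑ c' : Fin d,
            σ (a, c) (a, c') * ∑ b : Fin d, ψ (b, c') * (starRingEnd ℂ) (ψ (b, c)) := by
          refine Finset.sum_congr rfl fun a _ => ?_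
          rw [Finset.sum_comm]
          refine Finset.sum_congr rfl fun c _ => ?_
          rw [Finset.sum_comm]
          exact Finset.sum_congr rfl fun c' _ => (Finset.mul_sum _ _ _).symm
      _ = ∑ a : Fin d, ∑ c : Fin d, σ (a, c) (a, c) * (1 / (d:ℂ)) := by
          simp only [key, mul_ite, mul_zero]
          refine Finset.sum_congr rfl fun a _ => Finset.sum_congr rfl fun c _ => ?_
          simp [Finset.sum_ite_eq]
      _ = 1 / (d:ℂ) := by
          simp only [← Finset.sum_mul]
          have hts : ∑ a : Fin d, ∑ c : Fin d, σ (a, c) (a, c) = 1 := by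
            rw [← hσ1, Matrix.trace]
            simp [Matrix.diag, Fintype.sum_prod_type]
          rw [hts, one_mul]
  -- finish
  simp only [dcProb, prob, ← hψ, htr]
  have : ((1:ℂ) / (d:ℂ)).re = 1 / (d:ℝ) := by
    rw [show ((1:ℂ)/(d:ℂ)) = (((1/d : ℝ)):ℂ) by push_cast; ring]
    simp
  rw [this]
  field_simp
end
end

section
/- (Direct-cause processes bound the common-cause indicator.) Let d ≥ 2. If a process comb is purely direct-cause, i.e. J = ρ_A ⊗ J_N where ρ_A is positive semidefinite with Tr ρ_A = 1 and J_N is a positive semidefinite matrix on ℂ^d ⊗ ℂ^d (factors B and C) with Tr_C J_N = I_B (the Choi matrix of a channel from B to C), then for every choice of unitaries U₁, U₂ and every maximally entangled orthonormal basis {|Φ_i⟩}, the common-cause indicator distribution of J satisfies p_i ≤ 1/d for all i; consequently H(p) ≥ log₂ d. -/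
open Matrix BigOperators ComplexOrder

noncomputable section

/-! For `J = ρ ⊗ J_N` the outcome probabilities are `p_i = (1/d) ⟨ψ_i| ρ ⊗ M |ψ_i⟩` with
`M = Tr_B J_N` and `ψ_i = (U₁ ⊗ U₂) Φ_i`. Writing `ψ_i = vec X` turns this into
`Tr (Xᴴ M X ρᵀ) ≤ Tr (M X Xᴴ) · Tr ρ`; maximal entanglement survives the local unitaries and gives
`X Xᴴ = I/d`, so `d p_i ≤ Tr M / d = 1`. Completeness of the basis makes the `p_i` sum to
`Tr (ρ ⊗ M) / d = 1`, and a distribution with all masses at most `1/d` has entropy at least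
`log₂ d`. -/

open Kronecker

namespace Matrix

lemma re_trace_conjTranspose_mul_self {m n : Type*} [Fintype m] [Fintype n]
    (C : Matrix m n ℂ) : ((Cᴴ * C).trace).re = ∑ i, ∑ j, ‖C i j‖ ^ 2 := by
  rw [Finset.sum_comm]
  simp [trace, mul_apply, Complex.sq_norm, Complex.normSq_apply]

lemma norm_mul_conjTranspose_apply_sq_le {m n : Type*} [Fintype n] (A B : Matrix m n ℂ)
    (i j : m) : ‖(A * Bᴴ) i j‖ ^ 2 ≤ (∑ k, ‖A i k‖ ^ 2) * ∑ k, ‖B j k‖ ^ 2 := by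
  set a := WithLp.toLp 2 (fun k => A i k)
  set b := WithLp.toLp 2 (fun k => B j k)
  have h : (A * Bᴴ) i j = inner ℂ b a := by
    simp [a, b, mul_apply, EuclideanSpace.inner_eq_star_dotProduct, dotProduct]
  rw [h, ← EuclideanSpace.norm_sq_eq a, ← EuclideanSpace.norm_sq_eq b, ← mul_pow, mul_comm]
  exact pow_le_pow_left₀ (norm_nonneg _) (norm_inner_le_norm _ _) 2

/-- Writing `P = AᴴA` and `Q = BᴴB`, `Tr (PQ) = ‖ABᴴ‖²` in the Frobenius norm, and the bound is
Cauchy–Schwarz entrywise. -/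
lemma PosSemidef.re_trace_mul_le {n : Type*} [Fintype n] [DecidableEq n] {P Q : Matrix n n ℂ}
    (hP : P.PosSemidef) (hQ : Q.PosSemidef) :
    ((P * Q).trace).re ≤ P.trace.re * Q.trace.re := by
  open scoped MatrixOrder in
  obtain ⟨A, rfl⟩ := CStarAlgebra.nonneg_iff_eq_star_mul_self.mp hP.nonneg
  open scoped MatrixOrder in
  obtain ⟨B, rfl⟩ := CStarAlgebra.nonneg_iff_eq_star_mul_self.mp hQ.nonneg
  simp only [star_eq_conjTranspose]
  have hcycle : (Aᴴ * A * (Bᴴ * B)).trace = ((A * Bᴴ)ᴴ * (A * Bᴴ)).trace := by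
    rw [conjTranspose_mul, conjTranspose_conjTranspose, trace_mul_comm (B * Aᴴ),
      Matrix.mul_assoc Aᴴ, trace_mul_comm Aᴴ]
    simp only [Matrix.mul_assoc]
  rw [hcycle, re_trace_conjTranspose_mul_self, re_trace_conjTranspose_mul_self,
    re_trace_conjTranspose_mul_self, Finset.sum_mul_sum]
  exact Finset.sum_le_sum fun i _ => Finset.sum_le_sum fun j _ =>
    norm_mul_conjTranspose_apply_sq_le A B i j

lemma re_star_vec_dotProduct_kronecker_mulVec_vec_le {a c : Type*} [Fintype a] [Fintype c]
    [DecidableEq a] {ρ : Matrix a a ℂ} {M : Matrix c c ℂ} (hρ : ρ.PosSemidef)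
    (hM : M.PosSemidef) (X : Matrix c a ℂ) :
    (star (vec X) ⬝ᵥ (ρ ⊗ₖ M) *ᵥ vec X).re ≤ ((M * (X * Xᴴ)).trace).re * ρ.trace.re := by
  calc (star (vec X) ⬝ᵥ (ρ ⊗ₖ M) *ᵥ vec X).re = ((Xᴴ * M * X * ρᵀ).trace).re := by
        rw [kronecker_mulVec_vec, star_vec_dotProduct_vec]
        simp only [Matrix.mul_assoc]
    _ ≤ (Xᴴ * M * X).trace.re * ρᵀ.trace.re :=
        (hM.conjTranspose_mul_mul_same X).re_trace_mul_le hρ.transpose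
    _ = ((M * (X * Xᴴ)).trace).re * ρ.trace.re := by
        rw [trace_transpose, Matrix.mul_assoc, trace_mul_comm, Matrix.mul_assoc]

section Unitary

variable {R ι n : Type*} [CommRing R] [StarRing R] [Fintype ι] [Fintype n] [DecidableEq n]

lemma star_mulVec_dotProduct_mulVec_of_mem_unitaryGroup {W : Matrix n n R}
    (hW : W ∈ unitaryGroup n R) (x y : n → R) :
    star (W *ᵥ x) ⬝ᵥ (W *ᵥ y) = star x ⬝ᵥ y := by
  rw [star_mulVec, ← dotProduct_mulVec, mulVec_mulVec, ← star_eq_conjTranspose,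
    mem_unitaryGroup_iff'.mp hW, one_mulVec]

lemma sum_star_dotProduct_mulVec_eq_trace [DecidableEq ι] (e : ι ≃ n) {ψ : ι → n → R}
    (hψ : ∀ i j, star (ψ i) ⬝ᵥ ψ j = if i = j then 1 else 0) (A : Matrix n n R) :
    ∑ i, star (ψ i) ⬝ᵥ A *ᵥ ψ i = A.trace := by
  let B : Matrix n ι R := of fun x i => ψ i x
  have hB : Bᴴ * B = 1 := by
    ext i j
    simpa [B, mul_apply, one_apply, dotProduct] using hψ i j
  have hB' : B * Bᴴ = 1 := (mul_eq_one_comm_of_equiv e).mp hB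
  calc ∑ i, star (ψ i) ⬝ᵥ A *ᵥ ψ i = (Bᴴ * (A * B)).trace := by
        simp [B, trace, mul_apply, dotProduct, mulVec]
    _ = A.trace := by rw [trace_mul_comm, Matrix.mul_assoc, hB', Matrix.mul_one]

lemma mul_mul_transpose_mul_conjTranspose_self [DecidableEq ι] {U : Matrix ι ι R}
    {V : Matrix n n R} (hU : U ∈ unitaryGroup ι R) (hV : V ∈ unitaryGroup n R)
    {X : Matrix n ι R} {r : R} (hX : X * Xᴴ = r • 1) :
    (V * X * Uᵀ) * (V * X * Uᵀ)ᴴ = r • 1 := by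
  have hUt : Uᵀ * (Uᵀ)ᴴ = 1 :=
    mem_unitaryGroup_iff.mp (transpose_mem_unitaryGroup_iff.mpr hU)
  calc (V * X * Uᵀ) * (V * X * Uᵀ)ᴴ = V * (X * (Uᵀ * (Uᵀ)ᴴ) * Xᴴ) * Vᴴ := by
        simp only [conjTranspose_mul, Matrix.mul_assoc]
    _ = r • (V * Vᴴ) := by
        rw [hUt, Matrix.mul_one, hX, Matrix.mul_smul, Matrix.mul_one, Matrix.smul_mul]
    _ = r • 1 := by rw [← star_eq_conjTranspose, mem_unitaryGroup_iff.mp hV]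

end Unitary

end Matrix

def trFst {d₁ d₂ : ℕ} (M : Matrix (Fin d₁ × Fin d₂) (Fin d₁ × Fin d₂) ℂ) :
    Matrix (Fin d₂) (Fin d₂) ℂ :=
  of fun c c' => ∑ b : Fin d₁, M (b, c) (b, c')

section PartialTrace

variable {d₁ d₂ : ℕ} {M : Matrix (Fin d₁ × Fin d₂) (Fin d₁ × Fin d₂) ℂ}

lemma trace_trFst : (trFst M).trace = M.trace := by
  simp [trFst, trace, Fintype.sum_prod_type, Finset.sum_comm (γ := Fin d₂)]

lemma trace_trSnd : (trSnd M).trace = M.trace := by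
  simp [trSnd, trace, Fintype.sum_prod_type]

lemma Matrix.PosSemidef.trFst (hM : M.PosSemidef) : (_root_.trFst M).PosSemidef := by
  let V : Fin d₁ → Matrix (Fin d₁ × Fin d₂) (Fin d₂) ℂ :=
    fun b => of fun x c => if x = (b, c) then 1 else 0
  have h : _root_.trFst M = ∑ b, (V b)ᴴ * M * V b := by
    ext c c'
    simp [_root_.trFst, V, sum_apply, mul_apply, conjTranspose_apply]
  rw [h]
  exact posSemidef_sum _ fun b _ => hM.conjTranspose_mul_mul_same (V b)

end PartialTrace

lemma trace_productComb_mul_embAC {d : ℕ} (ρ : Matrix (Fin d) (Fin d) ℂ)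
    (JN P : Matrix (Fin d × Fin d) (Fin d × Fin d) ℂ) :
    ((of fun (p q : PIdx d d d) => ρ p.1 q.1 * JN (p.2.1, p.2.2) (q.2.1, q.2.2)) *
      embAC P).trace = ((ρ ⊗ₖ trFst JN) * P).trace := by
  simp only [trace, diag, mul_apply, of_apply, embAC, trFst, kroneckerMap_apply,
    Fintype.sum_prod_type, mul_ite, mul_one, mul_zero, Finset.sum_ite_irrel,
    Finset.sum_const_zero, Finset.sum_ite_eq', Finset.mem_univ, if_true, Finset.sum_mul,
    Finset.mul_sum]
  refine Finset.sum_congr rfl fun a _ => ?_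
  rw [Finset.sum_comm]
  refine Finset.sum_congr rfl fun c _ => ?_
  rw [Finset.sum_comm]
  refine Finset.sum_congr rfl fun a' _ => ?_
  rw [Finset.sum_comm]

lemma trace_mul_projMat {d : ℕ} (A : Matrix (Fin d × Fin d) (Fin d × Fin d) ℂ)
    (ψ : Fin d × Fin d → ℂ) : (A * projMat ψ).trace = star ψ ⬝ᵥ A *ᵥ ψ := by
  simp only [trace, diag, mul_apply, projMat, of_apply, dotProduct, mulVec, Pi.star_apply,
    Complex.star_def, Finset.mul_sum]
  exact Finset.sum_congr rfl fun x _ => Finset.sum_congr rfl fun y _ => by ring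

lemma kronVec_eq_kronecker_mulVec {d : ℕ} (U V : Matrix (Fin d) (Fin d) ℂ)
    (φ : Fin d × Fin d → ℂ) : kronVec U V φ = (U ⊗ₖ V) *ᵥ φ := by
  ext x
  simp [kronVec, mulVec, dotProduct]

lemma ccProb_productComb {d : ℕ} (U₁ U₂ ρ : Matrix (Fin d) (Fin d) ℂ)
    (Φ : Fin (d * d) → Fin d × Fin d → ℂ) (JN : Matrix (Fin d × Fin d) (Fin d × Fin d) ℂ)
    (i : Fin (d * d)) :
    ccProb U₁ U₂ Φ (of fun p q => ρ p.1 q.1 * JN (p.2.1, p.2.2) (q.2.1, q.2.2)) i =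
      1 / d * (star ((U₁ ⊗ₖ U₂) *ᵥ Φ i) ⬝ᵥ (ρ ⊗ₖ trFst JN) *ᵥ ((U₁ ⊗ₖ U₂) *ᵥ Φ i)).re := by
  rw [ccProb, prob, trace_productComb_mul_embAC, trace_mul_projMat, kronVec_eq_kronecker_mulVec]

namespace IsMaxEntBasis

variable {d : ℕ} {Φ : Fin (d * d) → Fin d × Fin d → ℂ} {U₁ U₂ : Matrix (Fin d) (Fin d) ℂ}

/-- `Φ i = vec Y` for `Y = of fun c a => Φ i (a, c)`, and `Y Yᴴ` is the C-marginal of `Φ i`. -/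
lemma mul_conjTranspose_self (hΦ : IsMaxEntBasis Φ) (i : Fin (d * d)) :
    of (fun c a => Φ i (a, c)) * (of fun c a => Φ i (a, c))ᴴ = (d : ℂ)⁻¹ • 1 := by
  ext b b'
  simpa [mul_apply, one_apply] using hΦ.2.2.1 i b b'

lemma re_star_dotProduct_kronecker_mulVec_le (hΦ : IsMaxEntBasis Φ)
    (hU₁ : U₁ ∈ unitaryGroup (Fin d) ℂ) (hU₂ : U₂ ∈ unitaryGroup (Fin d) ℂ)
    {ρ M : Matrix (Fin d) (Fin d) ℂ} (hρ : ρ.PosSemidef) (hM : M.PosSemidef) (i : Fin (d * d)) :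
    (star ((U₁ ⊗ₖ U₂) *ᵥ Φ i) ⬝ᵥ (ρ ⊗ₖ M) *ᵥ ((U₁ ⊗ₖ U₂) *ᵥ Φ i)).re ≤
      M.trace.re / d * ρ.trace.re := by
  have hvec : (U₁ ⊗ₖ U₂) *ᵥ Φ i = vec (U₂ * of (fun c a => Φ i (a, c)) * U₁ᵀ) :=
    kronecker_mulVec_vec U₂ (of fun c a => Φ i (a, c)) U₁
  rw [hvec]
  refine (re_star_vec_dotProduct_kronecker_mulVec_vec_le hρ hM _).trans_eq ?_
  rw [mul_mul_transpose_mul_conjTranspose_self hU₁ hU₂ (hΦ.mul_conjTranspose_self i),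
    Matrix.mul_smul, Matrix.mul_one, trace_smul, smul_eq_mul, ← Complex.ofReal_natCast,
    ← Complex.ofReal_inv, Complex.re_ofReal_mul, inv_mul_eq_div]

lemma sum_star_dotProduct_kronecker_mulVec (hΦ : IsMaxEntBasis Φ)
    (hU₁ : U₁ ∈ unitaryGroup (Fin d) ℂ) (hU₂ : U₂ ∈ unitaryGroup (Fin d) ℂ)
    (A : Matrix (Fin d × Fin d) (Fin d × Fin d) ℂ) :
    ∑ i, star ((U₁ ⊗ₖ U₂) *ᵥ Φ i) ⬝ᵥ A *ᵥ ((U₁ ⊗ₖ U₂) *ᵥ Φ i) = A.trace :=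
  sum_star_dotProduct_mulVec_eq_trace finProdFinEquiv.symm (fun i j => by
    rw [star_mulVec_dotProduct_mulVec_of_mem_unitaryGroup (kronecker_mem_unitary hU₁ hU₂)]
    exact hΦ.1 i j) A

end IsMaxEntBasis

lemma logb_le_H2_of_le_one_div {n : ℕ} {x : ℝ} (hx : 0 < x) {p : Fin n → ℝ}
    (hp : ∀ i, 0 ≤ p i) (hle : ∀ i, p i ≤ 1 / x) (hsum : ∑ i, p i = 1) :
    Real.logb 2 x ≤ H2 p := by
  have hterm : ∀ i, p i * Real.logb 2 x ≤ -(p i * Real.logb 2 (p i)) := by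
    intro i
    rcases (hp i).eq_or_lt with h | h
    · simp [← h]
    · have : Real.logb 2 x ≤ -Real.logb 2 (p i) := by
        rw [← Real.logb_inv]
        exact Real.logb_le_logb_of_le one_lt_two hx
          ((le_inv_comm₀ h hx).mp (by simpa only [one_div] using hle i))
      nlinarith
  calc Real.logb 2 x = ∑ i, p i * Real.logb 2 x := by rw [← Finset.sum_mul, hsum, one_mul]
    _ ≤ ∑ i, -(p i * Real.logb 2 (p i)) := Finset.sum_le_sum fun i _ => hterm i
    _ = H2 p := by rw [H2, Finset.sum_neg_distrib]

/-- direct-cause processes bound the common-cause indicator: if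
`J = ρ_A ⊗ J_N` with `ρ_A` a state and `J_N` the Choi matrix of a channel from B to C
(`J_N` PSD, `Tr_C J_N = I_B`), then for all unitaries `U₁, U₂` and any maximally
entangled orthonormal basis, `p_i ≤ 1/d` for all `i`, and hence `H(p) ≥ log₂ d`. -/
theorem direct_cause_bounds_common_cause_indicator {d : ℕ} (hd : 2 ≤ d)
    (Φ : Fin (d * d) → Fin d × Fin d → ℂ) (hΦ : IsMaxEntBasis Φ)
    (U₁ U₂ : Matrix (Fin d) (Fin d) ℂ)
    (hU₁ : U₁ ∈ Matrix.unitaryGroup (Fin d) ℂ)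
    (hU₂ : U₂ ∈ Matrix.unitaryGroup (Fin d) ℂ)
    (ρ : Matrix (Fin d) (Fin d) ℂ) (hρ : ρ.PosSemidef) (hρ1 : ρ.trace = 1)
    (JN : Matrix (Fin d × Fin d) (Fin d × Fin d) ℂ)
    (hJN : JN.PosSemidef) (hJNtr : trSnd JN = 1)
    (J : PMat d d d)
    (hJdef : J = Matrix.of fun p q => ρ p.1 q.1 * JN (p.2.1, p.2.2) (q.2.1, q.2.2)) :
    (∀ i, ccProb U₁ U₂ Φ J i ≤ 1 / d) ∧
    Real.logb 2 d ≤ H2 (ccProb U₁ U₂ Φ J) := by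
  have hd0 : (0 : ℝ) < d := by exact_mod_cast (by omega : 0 < d)
  have hM := hJN.trFst
  have hMtr : (trFst JN).trace = d := by
    rw [trace_trFst, ← trace_trSnd, hJNtr, trace_one, Fintype.card_fin]
  have hnonneg : ∀ i, 0 ≤ ccProb U₁ U₂ Φ J i := fun i => by
    rw [hJdef, ccProb_productComb]
    exact mul_nonneg (by positivity)
      (Complex.nonneg_iff.mp ((hρ.kronecker hM).dotProduct_mulVec_nonneg _)).1
  have hle : ∀ i, ccProb U₁ U₂ Φ J i ≤ 1 / d := fun i => by
    rw [hJdef, ccProb_productComb]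
    calc _ ≤ 1 / d * ((trFst JN).trace.re / d * ρ.trace.re) := by
          gcongr; exact hΦ.re_star_dotProduct_kronecker_mulVec_le hU₁ hU₂ hρ hM i
      _ = 1 / d := by simp [hMtr, hρ1, hd0.ne']
  have hsum : ∑ i, ccProb U₁ U₂ Φ J i = 1 := by
    simp_rw [hJdef, ccProb_productComb, ← Finset.mul_sum, ← Complex.re_sum,
      hΦ.sum_star_dotProduct_kronecker_mulVec hU₁ hU₂, trace_kronecker, hρ1, hMtr]
    simp [hd0.ne']
  exact ⟨hle, logb_le_H2_of_le_one_div hd0 hnonneg hle hsum⟩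
end
end
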